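/- The graph immersion X_f(u₁,u₂) = (f(u₁,u₂), f(u₁,u₂), u₁, u₂) in ℝ⁴₁ has zero mean curvature vector (is strongly marginally trapped) if and only if f is harmonic, i.e., f_{u₁u₁} + f_{u₂u₂} = 0. -/

import Mathlib

noncomputable section

/-- The pseudo inner product of Lorentz-Minkowski 4-space `ℝ⁴₁`. -/
def mink (x y : Fin 4 → ℝ) : ℝ :=
  -(x 0 * y 0) + x 1 * y 1 + x 2 * y 2 + x 3 * y 3

/-- Partial derivative in the `i`-th coordinate direction of a map on `ℝ × ℝ`. -/
def pd {E : Type*} [NormedAddCommGroup E] [NormedSpace ℝ E]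
    (i : Fin 2) (F : ℝ × ℝ → E) (u : ℝ × ℝ) : E :=
  fderiv ℝ F u (if i = 0 then (1, 0) else (0, 1))

/-- The induced (first fundamental form) matrix of a surface `X : U → ℝ⁴₁`. -/
def gmat (X : ℝ × ℝ → Fin 4 → ℝ) (u : ℝ × ℝ) : Matrix (Fin 2) (Fin 2) ℝ :=
  Matrix.of fun i j => mink (pd i X u) (pd j X u)

/-- Christoffel symbols `Γ^k_{ij}` of the induced metric. -/
def Christoffel (X : ℝ × ℝ → Fin 4 → ℝ) (k i j : Fin 2) (u : ℝ × ℝ) : ℝ :=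
  (1 / 2) * ∑ m : Fin 2, (gmat X u)⁻¹ k m *
    (pd i (fun w => gmat X w j m) u + pd j (fun w => gmat X w i m) u
      - pd m (fun w => gmat X w i j) u)

/-- The (vector valued) second fundamental form `II(X_{u_i}, X_{u_j})`. -/
def secFF (X : ℝ × ℝ → Fin 4 → ℝ) (i j : Fin 2) (u : ℝ × ℝ) : Fin 4 → ℝ :=
  pd i (pd j X) u - ∑ k : Fin 2, Christoffel X k i j u • pd k X u

/-- The mean curvature vector `𝔥` of a surface `X : U → ℝ⁴₁`. -/
def meanCurvVec (X : ℝ × ℝ → Fin 4 → ℝ) (u : ℝ × ℝ) : Fin 4 → ℝ :=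
  (1 / (2 * (gmat X u).det)) •
    (gmat X u 1 1 • secFF X 0 0 u - (2 * gmat X u 0 1) • secFF X 0 1 u
      + gmat X u 0 0 • secFF X 1 1 u)

/-- The graph surface `X_f(u₁,u₂) = (f(u₁,u₂), f(u₁,u₂), u₁, u₂)` in `ℝ⁴₁`. -/
def Xf (f : ℝ × ℝ → ℝ) (u : ℝ × ℝ) : Fin 4 → ℝ := ![f u, f u, u.1, u.2]

lemma pd_contDiff {f : ℝ × ℝ → ℝ} (hf : ContDiff ℝ (⊤ : ℕ∞) f) (i : Fin 2) :
    ContDiff ℝ (⊤ : ℕ∞) (pd i f) := by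
  unfold pd
  exact (hf.fderiv_right (by simp)).clm_apply contDiff_const

lemma pd_vec {a : ℝ × ℝ → ℝ} (ha : Differentiable ℝ a) (c₁ c₂ : ℝ)
    (i : Fin 2) (u : ℝ × ℝ) :
    pd i (fun u => ![a u, a u, c₁, c₂]) u = ![pd i a u, pd i a u, 0, 0] := by
  unfold pd
  have h : ∀ j : Fin 4, DifferentiableAt ℝ
      (fun u : ℝ × ℝ => (![a u, a u, c₁, c₂] : Fin 4 → ℝ) j) u := by
    intro j; fin_cases j <;> simp [ha.differentiableAt, differentiableAt_const]
  rw [show (fun u : ℝ × ℝ => (![a u, a u, c₁, c₂] : Fin 4 → ℝ)) =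
      (fun u j => (![a u, a u, c₁, c₂] : Fin 4 → ℝ) j) from rfl, fderiv_pi h]
  funext j
  fin_cases j <;> simp [ContinuousLinearMap.pi_apply]

lemma pd_Xf {f : ℝ × ℝ → ℝ} (hf : Differentiable ℝ f) (i : Fin 2) (u : ℝ × ℝ) :
    pd i (Xf f) u = ![pd i f u, pd i f u,
      if i = 0 then 1 else 0, if i = 0 then 0 else 1] := by
  unfold pd Xf
  have h : ∀ j : Fin 4, DifferentiableAt ℝ
      (fun u : ℝ × ℝ => (![f u, f u, u.1, u.2] : Fin 4 → ℝ) j) u := by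
    intro j; fin_cases j <;>
      simp [hf.differentiableAt, differentiableAt_fst, differentiableAt_snd]
  rw [show (fun u : ℝ × ℝ => (![f u, f u, u.1, u.2] : Fin 4 → ℝ)) =
      (fun u j => (![f u, f u, u.1, u.2] : Fin 4 → ℝ) j) from rfl, fderiv_pi h]
  funext j
  fin_cases j <;> fin_cases i <;>
    simp [ContinuousLinearMap.pi_apply, fderiv_fst, fderiv_snd]

lemma gmat_Xf {f : ℝ × ℝ → ℝ} (hf : Differentiable ℝ f) (u : ℝ × ℝ) :
    gmat (Xf f) u = 1 := by
  ext i j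
  fin_cases i <;> fin_cases j <;>
    simp [gmat, mink, pd_Xf hf, Matrix.one_apply]

lemma christoffel_Xf {f : ℝ × ℝ → ℝ} (hf : Differentiable ℝ f)
    (k i j : Fin 2) (u : ℝ × ℝ) : Christoffel (Xf f) k i j u = 0 := by
  unfold Christoffel
  have hconst : ∀ a b : Fin 2, (fun w => gmat (Xf f) w a b) =
      fun _ : ℝ × ℝ => (1 : Matrix (Fin 2) (Fin 2) ℝ) a b := by
    intro a b; funext w; rw [gmat_Xf hf]
  have hz : ∀ (m : Fin 2) (a b : Fin 2), pd m (fun w => gmat (Xf f) w a b) u = 0 := by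
    intro m a b; rw [hconst a b]; simp [pd]
  simp [hz]

lemma secFF_Xf {f : ℝ × ℝ → ℝ} (hf : ContDiff ℝ (⊤ : ℕ∞) f) (i j : Fin 2) (u : ℝ × ℝ) :
    secFF (Xf f) i j u = ![pd i (pd j f) u, pd i (pd j f) u, 0, 0] := by
  have hd : Differentiable ℝ f := hf.differentiable (by simp)
  unfold secFF
  rw [show (pd j (Xf f)) = fun u => ![pd j f u, pd j f u,
      if j = 0 then (1:ℝ) else 0, if j = 0 then (0:ℝ) else 1] from
    funext fun u => pd_Xf hd j u]
  rw [pd_vec ((pd_contDiff hf j).differentiable (by simp))]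
  simp [christoffel_Xf hd]

theorem stmt_13 (f : ℝ × ℝ → ℝ) (hf : ContDiff ℝ (⊤ : ℕ∞) f) :
    (∀ u : ℝ × ℝ, meanCurvVec (Xf f) u = 0) ↔
      (∀ u : ℝ × ℝ, pd 0 (pd 0 f) u + pd 1 (pd 1 f) u = 0) := by
  have hd : Differentiable ℝ f := hf.differentiable (by simp)
  have key : ∀ u : ℝ × ℝ, meanCurvVec (Xf f) u =
      (1/2 : ℝ) • ![pd 0 (pd 0 f) u + pd 1 (pd 1 f) u,
        pd 0 (pd 0 f) u + pd 1 (pd 1 f) u, 0, 0] := by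
    intro u
    unfold meanCurvVec
    rw [gmat_Xf hd, secFF_Xf hf 0 0, secFF_Xf hf 0 1, secFF_Xf hf 1 1]
    funext j
    fin_cases j <;> simp [Matrix.one_apply]
  constructor
  · intro h u
    have := congrFun (key u ▸ h u) 0
    simp at this
    linarith
  · intro h u
    rw [key u, h u]
    funext j; fin_cases j <;> simp
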